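/- arXiv:1805.01708 — 2 statements merged into one kernel-verified Lean document; each statement's English description precedes it below -/
import Mathlib

section
/- Assume $I_{ion}(v,g)=\sum_{j=1}^m H_j(g_j)(v-v_{r,j})$ where each $H_j:\mathbb{R}\to\mathbb{R}$ is bounded by $M$, positive, and Lipschitz with constant $L_1$, and $F:\mathbb{R}\to\mathbb{R}^m$ is Lipschitz with constant $L_2$. Let $\langle g,v\rangle(t)=e^{-\alpha t}(G_0+\int_0^t F(v(\tau))e^{\alpha\tau}d\tau)$ for $\alpha>0$ and fixed $G_0\in\mathbb{R}^m$. Then the map $v\mapsto I_{ion}(v(t),\langle g,v\rangle(t))$ is Lipschitz continuous from bounded subsets of $C([0,T];\mathbb{R})$ (sup norm) to $C([0,T];\mathbb{R})$. -/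
/-!
The difference of the gating variables of `v₁` and `v₂` is
`e^{-αt} ∫₀ᵗ e^{ατ} (F (v₁ τ) - F (v₂ τ)) dτ`, of norm at most `L₂ t sup |v₁ - v₂|`.
Each summand of the ionic current is split as
`H(a)(x - c) - H(b)(y - c) = H(a)(x - y) + (H(a) - H(b))(y - c)`: the first term is controlled
by the bound `M` on `H`, the second by its Lipschitz constant and the bound `R` on `v`.
-/

open Real MeasureTheory intervalIntegral Finset

noncomputable def gatingVariable {E : Type*} [NormedAddCommGroup E] [NormedSpace ℝ E]
    (α : ℝ) (G0 : E) (F : ℝ → E) (v : ℝ → ℝ) (t : ℝ) : E :=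
  Real.exp (-α * t) • (G0 + ∫ τ in (0:ℝ)..t, Real.exp (α * τ) • F (v τ))

def ionicCurrent {m : ℕ} (H : Fin m → ℝ → ℝ) (vr : Fin m → ℝ) (v : ℝ)
    (g : EuclideanSpace ℝ (Fin m)) : ℝ :=
  ∑ j, H j (g j) * (v - vr j)

section Gating

variable {E : Type*} [NormedAddCommGroup E] [NormedSpace ℝ E]

lemma gatingVariable_sub (α : ℝ) (G0 : E) {F : ℝ → E} (hF : Continuous F) {v₁ v₂ : ℝ → ℝ}
    (hv₁ : Continuous v₁) (hv₂ : Continuous v₂) (t : ℝ) :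
    gatingVariable α G0 F v₁ t - gatingVariable α G0 F v₂ t =
      Real.exp (-α * t) • ∫ τ in (0:ℝ)..t, Real.exp (α * τ) • (F (v₁ τ) - F (v₂ τ)) := by
  have hint : ∀ v : ℝ → ℝ, Continuous v →
      IntervalIntegrable (fun τ => Real.exp (α * τ) • F (v τ)) volume 0 t := fun v hv =>
    ((continuous_const.mul continuous_id).rexp.smul (hF.comp hv)).intervalIntegrable 0 t
  simp only [gatingVariable, smul_sub]
  rw [← smul_sub, add_sub_add_left_eq_sub, integral_sub (hint v₁ hv₁) (hint v₂ hv₂)]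

lemma norm_gatingVariable_sub_le {α t N : ℝ} {L : NNReal} (hα : 0 ≤ α) (ht : 0 ≤ t) (G0 : E)
    {F : ℝ → E} (hF : LipschitzWith L F) {v₁ v₂ : ℝ → ℝ} (hv₁ : Continuous v₁)
    (hv₂ : Continuous v₂) (hN : ∀ τ ∈ Set.Icc 0 t, |v₁ τ - v₂ τ| ≤ N) :
    ‖gatingVariable α G0 F v₁ t - gatingVariable α G0 F v₂ t‖ ≤ L * N * t := by
  have hintegrand : ∀ τ ∈ Set.uIoc 0 t,
      ‖Real.exp (α * τ) • (F (v₁ τ) - F (v₂ τ))‖ ≤ Real.exp (α * t) * (L * N) := by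
    intro τ hτ
    rw [Set.uIoc_of_le ht] at hτ
    rw [norm_smul, Real.norm_of_nonneg (Real.exp_pos _).le, ← dist_eq_norm]
    gcongr
    · exact hτ.2
    · calc dist (F (v₁ τ)) (F (v₂ τ)) ≤ L * dist (v₁ τ) (v₂ τ) := hF.dist_le_mul _ _
        _ ≤ L * N := by gcongr; exact hN τ (Set.Ioc_subset_Icc_self hτ)
  calc ‖gatingVariable α G0 F v₁ t - gatingVariable α G0 F v₂ t‖
      ≤ Real.exp (-α * t) * (Real.exp (α * t) * (L * N) * |t - 0|) := by
        rw [gatingVariable_sub α G0 hF.continuous hv₁ hv₂, norm_smul,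
          Real.norm_of_nonneg (Real.exp_pos _).le]
        gcongr
        exact norm_integral_le_of_norm_le_const hintegrand
    _ = L * N * t := by
        rw [sub_zero, abs_of_nonneg ht, ← mul_assoc, ← mul_assoc, ← Real.exp_add]
        simp

end Gating

lemma abs_mul_sub_sub_mul_sub_le {h : ℝ → ℝ} {L : NNReal} (hh : LipschitzWith L h)
    {M a b x y c : ℝ} (ha : |h a| ≤ M) :
    |h a * (x - c) - h b * (y - c)| ≤ M * |x - y| + L * |a - b| * |y - c| := by
  have hM : 0 ≤ M := (abs_nonneg _).trans ha
  have hlip : |h a - h b| ≤ L * |a - b| := by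
    simpa only [Real.dist_eq] using hh.dist_le_mul a b
  calc |h a * (x - c) - h b * (y - c)| = |h a * (x - y) + (h a - h b) * (y - c)| := by ring_nf
    _ ≤ |h a| * |x - y| + |h a - h b| * |y - c| := by
        rw [← abs_mul, ← abs_mul]; exact abs_add_le _ _
    _ ≤ M * |x - y| + L * |a - b| * |y - c| := by gcongr

lemma abs_ionicCurrent_sub_le {m : ℕ} {H : Fin m → ℝ → ℝ} {L : NNReal} {M R δv δg : ℝ}
    (hHbdd : ∀ j x, |H j x| ≤ M) (hHlip : ∀ j, LipschitzWith L (H j)) (vr : Fin m → ℝ)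
    {v₁ v₂ : ℝ} {g₁ g₂ : EuclideanSpace ℝ (Fin m)} (hv : |v₁ - v₂| ≤ δv) (hg : ‖g₁ - g₂‖ ≤ δg)
    (hv₂ : |v₂| ≤ R) :
    |ionicCurrent H vr v₁ g₁ - ionicCurrent H vr v₂ g₂| ≤
      ∑ j, (M * δv + L * δg * (R + |vr j|)) := by
  rw [ionicCurrent, ionicCurrent, ← Finset.sum_sub_distrib]
  refine (Finset.abs_sum_le_sum_abs _ _).trans (Finset.sum_le_sum fun j _ => ?_)
  have hM : 0 ≤ M := (abs_nonneg _).trans (hHbdd j 0)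
  have hgj : |g₁ j - g₂ j| ≤ δg := by
    simpa only [PiLp.sub_apply, Real.norm_eq_abs] using (PiLp.norm_apply_le (g₁ - g₂) j).trans hg
  refine (abs_mul_sub_sub_mul_sub_le (hHlip j) (hHbdd j _)).trans ?_
  have hδg : 0 ≤ δg := (norm_nonneg _).trans hg
  gcongr
  linarith [abs_sub v₂ (vr j)]

theorem stmt3_general (m : ℕ) (α T L1 L2 M : ℝ) (hα : 0 < α) (hT : 0 < T)
    (hM : 0 < M)
    (H : Fin m → ℝ → ℝ)
    (hHpos : ∀ j x, 0 < H j x) (hHbdd : ∀ j x, H j x ≤ M)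
    (hHlip : ∀ j, LipschitzWith (Real.toNNReal L1) (H j))
    (F : ℝ → EuclideanSpace ℝ (Fin m)) (hF : LipschitzWith (Real.toNNReal L2) F)
    (G0 : EuclideanSpace ℝ (Fin m)) (vr : Fin m → ℝ)
    (Iion : ℝ → EuclideanSpace ℝ (Fin m) → ℝ)
    (hIion : ∀ v g, Iion v g = ∑ j : Fin m, H j (g j) * (v - vr j))
    (S : (ℝ → ℝ) → ℝ → EuclideanSpace ℝ (Fin m))
    (hS : ∀ v t, S v t = Real.exp (-α * t) •
      (G0 + ∫ τ in (0:ℝ)..t, Real.exp (α * τ) • F (v τ))) :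
    ∀ R : ℝ, 0 < R → ∃ K : ℝ, 0 < K ∧
      ∀ v₁ v₂ : ℝ → ℝ, Continuous v₁ → Continuous v₂ →
        (∀ t ∈ Set.Icc (0:ℝ) T, |v₁ t| ≤ R) →
        (∀ t ∈ Set.Icc (0:ℝ) T, |v₂ t| ≤ R) →
        ∀ N : ℝ, (∀ τ ∈ Set.Icc (0:ℝ) T, |v₁ τ - v₂ τ| ≤ N) →
          ∀ t ∈ Set.Icc (0:ℝ) T,
            |Iion (v₁ t) (S v₁ t) - Iion (v₂ t) (S v₂ t)| ≤ K * N := by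
  obtain rfl : Iion = ionicCurrent H vr := funext₂ hIion
  obtain rfl : S = gatingVariable α G0 F := funext₂ hS
  have hHabs : ∀ j x, |H j x| ≤ M := fun j x => (abs_of_pos (hHpos j x)).trans_le (hHbdd j x)
  intro R hR
  set C : Fin m → ℝ := fun j => M + L1.toNNReal * L2.toNNReal * T * (R + |vr j|)
  have hC : ∀ j, 0 ≤ C j := fun j => by dsimp only [C]; positivity
  refine ⟨∑ j, C j + 1, by linarith [Finset.sum_nonneg fun j (_ : j ∈ univ) => hC j], ?_⟩
  intro v₁ v₂ hv₁ hv₂ _ hb₂ N hN t ht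
  have hN0 : 0 ≤ N := (abs_nonneg _).trans (hN t ht)
  have hg : ‖gatingVariable α G0 F v₁ t - gatingVariable α G0 F v₂ t‖ ≤ L2.toNNReal * N * T :=
    (norm_gatingVariable_sub_le hα.le ht.1 G0 hF hv₁ hv₂
      fun τ hτ => hN τ ⟨hτ.1, hτ.2.trans ht.2⟩).trans (by gcongr; exact ht.2)
  calc _ ≤ ∑ j, (M * N + L1.toNNReal * (L2.toNNReal * N * T) * (R + |vr j|)) :=
        abs_ionicCurrent_sub_le hHabs hHlip vr (hN t ht) hg (hb₂ t ht)
    _ = (∑ j, C j) * N := by rw [Finset.sum_mul]; exact Finset.sum_congr rfl fun j _ => by ring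
    _ ≤ (∑ j, C j + 1) * N := mul_le_mul_of_nonneg_right (by linarith) hN0

theorem stmt3 (m : ℕ) (α T L1 L2 M : ℝ) (hα : 0 < α) (hT : 0 < T)
    (hL1 : 0 ≤ L1) (hL2 : 0 ≤ L2) (hM : 0 < M)
    (H : Fin m → ℝ → ℝ)
    (hHpos : ∀ j x, 0 < H j x) (hHbdd : ∀ j x, H j x ≤ M)
    (hHlip : ∀ j, LipschitzWith (Real.toNNReal L1) (H j))
    (F : ℝ → EuclideanSpace ℝ (Fin m)) (hF : LipschitzWith (Real.toNNReal L2) F)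
    (G0 : EuclideanSpace ℝ (Fin m)) (vr : Fin m → ℝ)
    (Iion : ℝ → EuclideanSpace ℝ (Fin m) → ℝ)
    (hIion : ∀ v g, Iion v g = ∑ j : Fin m, H j (g j) * (v - vr j))
    (S : (ℝ → ℝ) → ℝ → EuclideanSpace ℝ (Fin m))
    (hS : ∀ v t, S v t = Real.exp (-α * t) •
      (G0 + ∫ τ in (0:ℝ)..t, Real.exp (α * τ) • F (v τ))) :
    ∀ R : ℝ, 0 < R → ∃ K : ℝ, 0 < K ∧
      ∀ v₁ v₂ : ℝ → ℝ, Continuous v₁ → Continuous v₂ →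
        (∀ t ∈ Set.Icc (0:ℝ) T, |v₁ t| ≤ R) →
        (∀ t ∈ Set.Icc (0:ℝ) T, |v₂ t| ≤ R) →
        ∀ N : ℝ, (∀ τ ∈ Set.Icc (0:ℝ) T, |v₁ τ - v₂ τ| ≤ N) →
          ∀ t ∈ Set.Icc (0:ℝ) T,
            |Iion (v₁ t) (S v₁ t) - Iion (v₂ t) (S v₂ t)| ≤ K * N :=
  stmt3_general m α T L1 L2 M hα hT hM H hHpos hHbdd hHlip F hF G0 vr Iion hIion S hS
end

section
/- Let $\sigma_i,\sigma_e>0$, $\varphi_B\in(0,\pi)$, and $\delta>0$ small. Consider the transcendental equation in $\alpha$: $\alpha\sigma_i\tan(\alpha\delta\pi)=\sigma_e\alpha\tan(\alpha\delta(\varphi_B-\pi))\big(1-\frac{\alpha\sigma_i}{\delta}\tan(\alpha\delta\pi)\varphi_B\big)$. Then for sufficiently small $\delta$ there is a unique solution $\alpha_\delta\in(0,1/(2\delta))$, and $\alpha_\delta = \frac{1}{\sqrt{\varphi_B}}\sqrt{\frac{1}{\sigma_i\pi}+\frac{1}{\sigma_e(\pi-\varphi_B)}} + O(\delta^2)$ as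 $\delta\to 0$. -/
/-!
Put `t = α δ ∈ (0, 1/2)`. Dividing the equation by `α² δ tan(π t) tan((π - φB) t)` turns it into
`G t = C / δ²` with `G t = σi / (t tan((π - φB) t)) + σe / (t tan(π t))` and `C = σi σe φB`.
Since `u tan u` increases on `(0, π/2)`, `G` is continuous and strictly decreasing, and the
elementary bounds `1/u² - 1 ≤ 1/(u tan u) ≤ 1/u²` give `A/t² - M ≤ G t ≤ A/t²` with
`A = σi/(π - φB) + σe/π` and `M = σi (π - φB) + σe π`. So `G` blows up at `0`, and once
`C/δ²` exceeds `G (1/4)` the intermediate value theorem gives a root, which is unique by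
monotonicity. Any root satisfies `A/(C + M δ²) ≤ α² ≤ A/C`, hence `α = √(A/C) + O(δ²)`.
-/

open Real Set

noncomputable def invMulTan (u : ℝ) : ℝ := (u * tan u)⁻¹

section invMulTan

variable {u : ℝ}

lemma mul_tan_pos (hu : u ∈ Ioo 0 (π / 2)) : 0 < u * tan u :=
  mul_pos hu.1 (tan_pos_of_pos_of_lt_pi_div_two hu.1 hu.2)

lemma invMulTan_pos (hu : u ∈ Ioo 0 (π / 2)) : 0 < invMulTan u :=
  inv_pos.2 (mul_tan_pos hu)

lemma invMulTan_le (hu : u ∈ Ioo 0 (π / 2)) : invMulTan u ≤ (u ^ 2)⁻¹ := by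
  rw [sq]
  exact inv_anti₀ (by have := hu.1; positivity)
    (mul_le_mul_of_nonneg_left (lt_tan hu.1 hu.2).le hu.1.le)

/-- Equivalent to `(1 - u²) sin u ≤ u cos u`, which for `u < 1` follows from `sin u ≤ u` and
`1 - u² / 2 ≤ cos u`. -/
lemma inv_sq_sub_one_le_invMulTan (hu : u ∈ Ioo 0 (π / 2)) : (u ^ 2)⁻¹ - 1 ≤ invMulTan u := by
  obtain ⟨hu0, huπ⟩ := hu
  have hcos : 0 < cos u := cos_pos_of_mem_Ioo ⟨by linarith [pi_pos], huπ⟩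
  have hsin : 0 < sin u := sin_pos_of_pos_of_lt_pi hu0 (by linarith [pi_pos])
  have key : (1 - u ^ 2) * sin u ≤ u * cos u := by
    have := sin_le hu0.le
    have := one_sub_sq_div_two_le_cos (x := u)
    rcases le_total (u ^ 2) 1 with h | h
    · nlinarith [mul_le_mul_of_nonneg_left this (sub_nonneg.2 h)]
    · nlinarith
  have hu2 : 0 < u ^ 2 * sin u := by positivity
  calc (u ^ 2)⁻¹ - 1 = (1 - u ^ 2) * sin u / (u ^ 2 * sin u) := by field_simp
    _ ≤ u * cos u / (u ^ 2 * sin u) := by gcongr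
    _ = invMulTan u := by rw [invMulTan, tan_eq_sin_div_cos]; field_simp

lemma mul_tan_strictMonoOn : StrictMonoOn (fun u => u * tan u) (Ioo 0 (π / 2)) :=
  fun _ hu _ hv huv =>
    mul_lt_mul'' huv (tan_lt_tan_of_nonneg_of_lt_pi_div_two hu.1.le hv.2 huv) hu.1.le
      (tan_pos_of_pos_of_lt_pi_div_two hu.1 hu.2).le

lemma invMulTan_strictAntiOn : StrictAntiOn invMulTan (Ioo 0 (π / 2)) :=
  fun _ hu _ hv huv => inv_strictAnti₀ (mul_tan_pos hu) (mul_tan_strictMonoOn hu hv huv)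

lemma continuousOn_invMulTan : ContinuousOn invMulTan (Ioo 0 (π / 2)) := by
  refine (continuousOn_id.mul (continuousOn_tan.mono fun u hu => ?_)).inv₀
    fun u hu => (mul_tan_pos hu).ne'
  exact (cos_pos_of_mem_Ioo ⟨by linarith [hu.1, pi_pos], hu.2⟩).ne'

end invMulTan

lemma mul_mem_Ioo_pi_div_two {t c : ℝ} (ht : t ∈ Ioo 0 (1 / 2)) (hc : c ∈ Ioc 0 π) :
    t * c ∈ Ioo 0 (π / 2) :=
  ⟨mul_pos ht.1 hc.1, by nlinarith [ht.1, ht.2, hc.1, hc.2]⟩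

/-- The function `G` of the reduced equation `G (α δ) = σi σe φB / δ²`, written through
`σ c invMulTan (t c) = σ / (t tan (t c))`. -/
noncomputable def cornerFn (σi σe φB t : ℝ) : ℝ :=
  σi * (π - φB) * invMulTan (t * (π - φB)) + σe * π * invMulTan (t * π)

section cornerFn

variable {σi σe φB : ℝ}

lemma pi_sub_mem_Ioc (hφB : φB ∈ Ioo 0 π) : π - φB ∈ Ioc 0 π :=
  ⟨by linarith [hφB.2], by linarith [hφB.1]⟩

lemma pi_mem_Ioc : π ∈ Ioc 0 π := ⟨pi_pos, le_rfl⟩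

lemma cornerFn_pos (hσi : 0 < σi) (hσe : 0 < σe) (hφB : φB ∈ Ioo 0 π) {t : ℝ}
    (ht : t ∈ Ioo 0 (1 / 2)) : 0 < cornerFn σi σe φB t := by
  have := (pi_sub_mem_Ioc hφB).1
  have := invMulTan_pos (mul_mem_Ioo_pi_div_two ht (pi_sub_mem_Ioc hφB))
  have := invMulTan_pos (mul_mem_Ioo_pi_div_two ht pi_mem_Ioc)
  unfold cornerFn
  positivity

lemma cornerFn_strictAntiOn (hσi : 0 < σi) (hσe : 0 < σe) (hφB : φB ∈ Ioo 0 π) :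
    StrictAntiOn (cornerFn σi σe φB) (Ioo 0 (1 / 2)) := by
  have term {σ c : ℝ} (hσ : 0 < σ) (hc : c ∈ Ioc 0 π) :
      StrictAntiOn (fun t => σ * c * invMulTan (t * c)) (Ioo 0 (1 / 2)) :=
    fun s hs t ht hst => mul_lt_mul_of_pos_left
      (invMulTan_strictAntiOn (mul_mem_Ioo_pi_div_two hs hc) (mul_mem_Ioo_pi_div_two ht hc)
        (mul_lt_mul_of_pos_right hst hc.1)) (mul_pos hσ hc.1)
  exact (term hσi (pi_sub_mem_Ioc hφB)).add (term hσe pi_mem_Ioc)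

lemma continuousOn_cornerFn (hφB : φB ∈ Ioo 0 π) :
    ContinuousOn (cornerFn σi σe φB) (Ioo 0 (1 / 2)) := by
  have term {σ c : ℝ} (hc : c ∈ Ioc 0 π) :
      ContinuousOn (fun t => σ * c * invMulTan (t * c)) (Ioo 0 (1 / 2)) :=
    continuousOn_const.mul (continuousOn_invMulTan.comp (continuousOn_id.mul continuousOn_const)
      fun t ht => mul_mem_Ioo_pi_div_two ht hc)
  exact (term (pi_sub_mem_Ioc hφB)).add (term pi_mem_Ioc)

lemma cornerFn_le (hσi : 0 < σi) (hσe : 0 < σe) (hφB : φB ∈ Ioo 0 π) {t : ℝ}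
    (ht : t ∈ Ioo 0 (1 / 2)) :
    cornerFn σi σe φB t ≤ (σi / (π - φB) + σe / π) / t ^ 2 := by
  have term {σ c : ℝ} (hσ : 0 < σ) (hc : c ∈ Ioc 0 π) :
      σ * c * invMulTan (t * c) ≤ σ / c / t ^ 2 := by
    calc σ * c * invMulTan (t * c) ≤ σ * c * ((t * c) ^ 2)⁻¹ := by
          gcongr
          · exact (mul_pos hσ hc.1).le
          · exact invMulTan_le (mul_mem_Ioo_pi_div_two ht hc)
      _ = σ / c / t ^ 2 := by field_simp [hc.1.ne']
  have := term hσi (pi_sub_mem_Ioc hφB)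
  have := term hσe pi_mem_Ioc
  rw [add_div]
  unfold cornerFn
  linarith

lemma sub_le_cornerFn (hσi : 0 < σi) (hσe : 0 < σe) (hφB : φB ∈ Ioo 0 π) {t : ℝ}
    (ht : t ∈ Ioo 0 (1 / 2)) :
    (σi / (π - φB) + σe / π) / t ^ 2 - (σi * (π - φB) + σe * π) ≤ cornerFn σi σe φB t := by
  have term {σ c : ℝ} (hσ : 0 < σ) (hc : c ∈ Ioc 0 π) :
      σ / c / t ^ 2 - σ * c ≤ σ * c * invMulTan (t * c) := by
    calc σ / c / t ^ 2 - σ * c = σ * c * (((t * c) ^ 2)⁻¹ - 1) := by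
          field_simp [hc.1.ne', ht.1.ne']
      _ ≤ σ * c * invMulTan (t * c) := by
          gcongr
          · exact (mul_pos hσ hc.1).le
          · exact inv_sq_sub_one_le_invMulTan (mul_mem_Ioo_pi_div_two ht hc)
  have := term hσi (pi_sub_mem_Ioc hφB)
  have := term hσe pi_mem_Ioc
  rw [add_div]
  unfold cornerFn
  linarith

lemma exists_cornerFn_eq (hσi : 0 < σi) (hσe : 0 < σe) (hφB : φB ∈ Ioo 0 π) {b L : ℝ}
    (hb : b ∈ Ioo 0 (1 / 2)) (hL : cornerFn σi σe φB b ≤ L) :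
    ∃ t ∈ Ioc 0 b, cornerFn σi σe φB t = L := by
  set A := σi / (π - φB) + σe / π
  set M := σi * (π - φB) + σe * π
  have hc := (pi_sub_mem_Ioc hφB).1
  have hA : 0 < A := by positivity
  have hLM : 0 < L + M := by
    have := cornerFn_pos hσi hσe hφB hb
    have : 0 < M := by positivity
    linarith
  set a := min b (sqrt (A / (L + M)))
  have ha : 0 < a := lt_min hb.1 (sqrt_pos.2 (by positivity))
  have haI : a ∈ Ioo 0 (1 / 2) := ⟨ha, (min_le_left _ _).trans_lt hb.2⟩
  have ha2 : a ^ 2 ≤ A / (L + M) := by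
    calc a ^ 2 ≤ sqrt (A / (L + M)) ^ 2 := pow_le_pow_left₀ ha.le (min_le_right _ _) 2
      _ = A / (L + M) := sq_sqrt (by positivity)
  have hLa : L ≤ cornerFn σi σe φB a := by
    calc L = A / (A / (L + M)) - M := by field_simp; ring
      _ ≤ A / a ^ 2 - M := by gcongr
      _ ≤ cornerFn σi σe φB a := sub_le_cornerFn hσi hσe hφB haI
  obtain ⟨t, ht, hGt⟩ := intermediate_value_Icc' (min_le_left _ _)
    ((continuousOn_cornerFn hφB).mono (Icc_subset_Ioo ha hb.2)) ⟨hL, hLa⟩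
  exact ⟨t, ⟨ha.trans_le ht.1, ht.2⟩, hGt⟩

lemma mem_Ioo_one_div_two_mul_iff {α δ : ℝ} (hδ : 0 < δ) :
    α ∈ Ioo 0 (1 / (2 * δ)) ↔ α * δ ∈ Ioo 0 (1 / 2) := by
  rw [show 1 / (2 * δ) = 1 / 2 / δ by rw [div_div], mem_Ioo, mem_Ioo, lt_div_iff₀ hδ,
    mul_pos_iff_of_pos_right hδ]

lemma corner_equation_iff (hφB : φB ∈ Ioo 0 π) {δ α : ℝ}
    (hδ : 0 < δ) (hα : α ∈ Ioo 0 (1 / (2 * δ))) :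
    α * σi * tan (α * δ * π) =
        σe * α * tan (α * δ * (φB - π)) * (1 - (α * σi / δ) * tan (α * δ * π) * φB) ↔
      cornerFn σi σe φB (α * δ) = σi * σe * φB / δ ^ 2 := by
  have ht := (mem_Ioo_one_div_two_mul_iff hδ).1 hα
  have h₁ := mul_tan_pos (mul_mem_Ioo_pi_div_two ht (pi_sub_mem_Ioc hφB))
  have h₂ := mul_tan_pos (mul_mem_Ioo_pi_div_two ht pi_mem_Ioc)
  have hc := (pi_sub_mem_Ioc hφB).1
  have hα0 := hα.1
  rw [show α * δ * (φB - π) = -(α * δ * (π - φB)) by ring, tan_neg, cornerFn, invMulTan,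
    invMulTan]
  generalize tan (α * δ * (π - φB)) = T₁ at h₁ ⊢
  generalize tan (α * δ * π) = T₂ at h₂ ⊢
  have hT₁ : 0 < T₁ := pos_of_mul_pos_right h₁ (by positivity)
  have hT₂ : 0 < T₂ := pos_of_mul_pos_right h₂ (by positivity)
  constructor <;> intro h <;> field_simp at h ⊢ <;> linear_combination h

lemma abs_sub_sqrt_div_le {A C M δ α : ℝ} (hC : 0 < C) (hM : 0 ≤ M) (hδ : 0 < δ) (hα : 0 < α)
    (hlow : A / (α * δ) ^ 2 - M ≤ C / δ ^ 2) (hup : C / δ ^ 2 ≤ A / (α * δ) ^ 2) :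
    |α - sqrt (A / C)| ≤ sqrt (A / C) * M / C * δ ^ 2 := by
  have hαδ : 0 < (α * δ) ^ 2 := by positivity
  have hup' : α ^ 2 * C ≤ A := by
    rw [div_le_div_iff₀ (by positivity) hαδ] at hup; nlinarith
  have hlow' : A ≤ α ^ 2 * (C + M * δ ^ 2) := by
    rw [sub_le_iff_le_add, div_add' _ _ _ (by positivity),
      div_le_div_iff₀ hαδ (by positivity)] at hlow
    nlinarith
  set E := sqrt (A / C)
  have hE2 : E ^ 2 = A / C := sq_sqrt (div_nonneg (by nlinarith) hC.le)
  have hαE : α ≤ E := (le_sqrt' hα).2 ((le_div_iff₀ hC).2 hup')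
  have hE : 0 < E := hα.trans_le hαE
  have key : (E - α) * C ≤ E * M * δ ^ 2 := by
    have hEC : E ^ 2 * C = A := by rw [hE2]; field_simp
    refine le_of_mul_le_mul_right ?_ hE
    nlinarith [mul_le_mul_of_nonneg_right (mul_le_mul hαE hαE hα.le hE.le)
      (by positivity : 0 ≤ M * δ ^ 2), mul_nonneg (sub_nonneg.2 hαE) (mul_nonneg hα.le hC.le)]
  rw [abs_sub_comm, abs_of_nonneg (sub_nonneg.2 hαE), div_mul_eq_mul_div, le_div_iff₀ hC]
  linarith

lemma sqrt_corner_constant (hσi : 0 < σi) (hσe : 0 < σe) (hφB : φB ∈ Ioo 0 π) :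
    sqrt ((σi / (π - φB) + σe / π) / (σi * σe * φB)) =
      1 / sqrt φB * sqrt (1 / (σi * π) + 1 / (σe * (π - φB))) := by
  rw [one_div_mul_eq_div, ← sqrt_div' _ hφB.1.le]
  congr 1
  field_simp
  ring

end cornerFn

theorem stmt11 (σi σe φB : ℝ) (hσi : 0 < σi) (hσe : 0 < σe)
    (hφB : φB ∈ Set.Ioo 0 Real.pi) :
    ∃ δ0 > (0:ℝ), ∃ K > (0:ℝ), ∀ δ : ℝ, 0 < δ → δ < δ0 →
      (∃! α : ℝ, α ∈ Set.Ioo 0 (1 / (2 * δ)) ∧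
        α * σi * Real.tan (α * δ * Real.pi) =
          σe * α * Real.tan (α * δ * (φB - Real.pi)) *
            (1 - (α * σi / δ) * Real.tan (α * δ * Real.pi) * φB)) ∧
      ∀ α : ℝ, α ∈ Set.Ioo 0 (1 / (2 * δ)) →
        α * σi * Real.tan (α * δ * Real.pi) =
          σe * α * Real.tan (α * δ * (φB - Real.pi)) *
            (1 - (α * σi / δ) * Real.tan (α * δ * Real.pi) * φB) →
        |α - (1 / Real.sqrt φB) *
            Real.sqrt (1 / (σi * Real.pi) + 1 / (σe * (Real.pi - φB)))| ≤
          K * δ ^ 2 := by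
  set A := σi / (π - φB) + σe / π
  set C := σi * σe * φB
  set M := σi * (π - φB) + σe * π
  set G := cornerFn σi σe φB
  have hc := (pi_sub_mem_Ioc hφB).1
  have hC : 0 < C := mul_pos (mul_pos hσi hσe) hφB.1
  have hG : 0 < G (1 / 4) := cornerFn_pos hσi hσe hφB (by norm_num)
  refine ⟨sqrt (C / G (1 / 4)), sqrt_pos.2 (div_pos hC hG), sqrt (A / C) * M / C,
    by positivity, fun δ hδ hδ0 => ?_⟩
  have hsol := fun α (hα : α ∈ Ioo 0 (1 / (2 * δ))) =>
    corner_equation_iff (σi := σi) (σe := σe) hφB hδ hα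
  refine ⟨?_, fun α hα heq => ?_⟩
  · have hL : G (1 / 4) ≤ C / δ ^ 2 := by
      have := (lt_sqrt hδ.le).1 hδ0
      rw [lt_div_iff₀ hG] at this
      rw [le_div_iff₀ (by positivity)]
      linarith
    obtain ⟨t, ht, hGt⟩ := exists_cornerFn_eq hσi hσe hφB (by norm_num) hL
    have ht' : t ∈ Ioo 0 (1 / 2) := ⟨ht.1, ht.2.trans_lt (by norm_num)⟩
    have htδ : t / δ ∈ Ioo 0 (1 / (2 * δ)) := by
      rwa [mem_Ioo_one_div_two_mul_iff hδ, div_mul_cancel₀ _ hδ.ne']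
    refine ⟨t / δ, ⟨htδ, (hsol _ htδ).2 (by rwa [div_mul_cancel₀ _ hδ.ne'])⟩,
      fun β ⟨hβ, hβeq⟩ => ?_⟩
    refine eq_div_of_mul_eq hδ.ne' ((cornerFn_strictAntiOn hσi hσe hφB).injOn
      ((mem_Ioo_one_div_two_mul_iff hδ).1 hβ) ht' ?_)
    rw [hGt, (hsol β hβ).1 hβeq]
  · have ht := (mem_Ioo_one_div_two_mul_iff hδ).1 hα
    have hGα := (hsol α hα).1 heq
    rw [← sqrt_corner_constant hσi hσe hφB]
    refine abs_sub_sqrt_div_le hC (by positivity) hδ hα.1 ?_ ?_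
    · exact hGα ▸ sub_le_cornerFn hσi hσe hφB ht
    · exact hGα ▸ cornerFn_le hσi hσe hφB ht
end
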